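/- arXiv:2007.01673 — 4 statements merged into one kernel-verified Lean document; each statement's English description precedes it below -/
import Mathlib

section
/- Let ε > 0 and k ≥ 1. Every graph H on more than k·(2k)^{1/ε} vertices such that every subgraph of H on n' vertices has at most (n')^{2-ε} edges (i.e., H belongs to a hereditary ε-sparse class) contains an independent set of size at least k. -/
/-!
Greedy argument. A set of `n` vertices spans at most `n ^ (2 - ε)` edges, so one of its vertices
has at most `2 n ^ (1 - ε)` neighbours in it; put that vertex into the independent set and discard
its neighbours. Let `M = (2k) ^ (1 / ε)` and `2 ≤ j + 1 ≤ k`. If `n > (j + 1) M`, then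
`n ^ ε ≥ (j + 1) ^ ε 2k`, so at most `n / ((j + 1) 2 ^ ε)` neighbours are discarded and more than
`(j + 1) M - 2 ^ (-ε) M - 1 ≥ j M` vertices remain, because
`M (1 - 2 ^ (-ε)) ≥ 4 ^ (1 / ε) (1 - 2 ^ (-ε)) ≥ 1`.
-/

open Finset Real

lemma exp_le_exp_mul_exp_sub_one {s t : ℝ} (hs : 0 ≤ s) (ht : 0 < t)
    (hst : 1 ≤ s * t + (s * t) ^ 2 / 4) : exp t ≤ exp s * (exp t - 1) := by
  have hs₂ := quadratic_le_exp_of_nonneg hs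
  have ht₂ := quadratic_le_exp_of_nonneg ht.le
  -- the difference of the two sides is `s t + (s t)² / 4 - 1` plus nonnegative terms
  have hpoly : 1 + t + t ^ 2 / 2 ≤ (1 + s + s ^ 2 / 2) * (t + t ^ 2 / 2) := by
    nlinarith [mul_nonneg (mul_nonneg hs ht.le) (add_nonneg hs ht.le)]
  nlinarith [add_one_le_exp s]

lemma two_rpow_le_four_rpow_inv_mul_two_rpow_sub_one {ε : ℝ} (hε : 0 < ε) :
    (2 : ℝ) ^ ε ≤ 4 ^ (1 / ε) * (2 ^ ε - 1) := by
  have hlog : log 4 = 2 * log 2 := by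
    rw [show (4 : ℝ) = 2 ^ 2 by norm_num, log_pow, Nat.cast_ofNat]
  have hlog2 := log_two_gt_d9
  rw [rpow_def_of_pos two_pos, rpow_def_of_pos four_pos, hlog]
  apply exp_le_exp_mul_exp_sub_one (by positivity) (by positivity)
  have hst : 2 * log 2 * (1 / ε) * (log 2 * ε) = 2 * log 2 ^ 2 := by field_simp
  rw [hst]
  nlinarith

lemma sub_one_mul_lt_sub_one_sub {ε a k n d : ℝ} (hε : 0 < ε) (ha : 2 ≤ a) (hak : a ≤ k)
    (hn : a * (2 * k) ^ (1 / ε) < n) (hd₀ : 0 ≤ d) (hd : n * d ≤ 2 * n ^ (2 - ε)) :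
    (a - 1) * (2 * k) ^ (1 / ε) < n - 1 - d := by
  set M := (2 * k) ^ (1 / ε) with hM
  set x := (2 : ℝ) ^ ε
  have hM₀ : 0 < M := rpow_pos_of_pos (by linarith) _
  have hn₀ : 0 < n := by nlinarith
  have hx₁ : 1 < x := one_lt_rpow (by norm_num) hε
  have hdeg : d * n ^ ε ≤ 2 * n := by
    refine le_of_mul_le_mul_left ?_ hn₀
    calc n * (d * n ^ ε) = n * d * n ^ ε := by ring
      _ ≤ 2 * n ^ (2 - ε) * n ^ ε := by gcongr
      _ = n * (2 * n) := by rw [mul_assoc, ← rpow_add hn₀, sub_add_cancel, rpow_two]; ring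
  have hnε : a ^ ε * (2 * k) ≤ n ^ ε := by
    have hMε : M ^ ε = 2 * k := by rw [hM, one_div, rpow_inv_rpow (by linarith) hε.ne']
    rw [← hMε, ← mul_rpow (by linarith) hM₀.le]
    exact rpow_le_rpow (by positivity) hn.le hε.le
  have hax : a * x ≤ k * a ^ ε :=
    mul_le_mul hak (rpow_le_rpow two_pos.le ha hε.le) (by positivity) (by linarith)
  have hdx : a * x * d ≤ n := by
    nlinarith [rpow_pos_of_pos (by linarith : (0 : ℝ) < a) ε]
  have hMx : x ≤ M * (x - 1) := by
    refine (two_rpow_le_four_rpow_inv_mul_two_rpow_sub_one hε).trans ?_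
    gcongr
    exact rpow_le_rpow (by norm_num) (by linarith) (by positivity)
  have hax₀ : 0 < a * x := by positivity
  refine lt_of_mul_lt_mul_left ?_ hax₀.le
  nlinarith [mul_lt_mul_of_pos_right hn (by nlinarith : 0 < a * x - 1),
    mul_le_mul_of_nonneg_left hMx (by linarith : (0 : ℝ) ≤ a)]

namespace SimpleGraph

lemma IsNIndepSet.insert {V : Type*} [DecidableEq V] {H : SimpleGraph V} {n : ℕ} {s : Finset V}
    {a : V} (hs : H.IsNIndepSet n s) (h : ∀ b ∈ s, a ≠ b ∧ ¬H.Adj a b) :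
    H.IsNIndepSet (n + 1) (insert a s) := by
  rw [← isNClique_compl] at hs ⊢
  exact hs.insert fun b hb => (H.compl_adj a b).2 (h b hb)

variable {V : Type*} [Fintype V] [DecidableEq V] (H : SimpleGraph V) [DecidableRel H.Adj]

def edgesWithin (s : Finset V) : Finset (Sym2 V) :=
  H.edgeFinset.filter fun e => ∀ v ∈ e, v ∈ s

lemma sum_card_neighbors_le_two_mul_card_edgesWithin (s : Finset V) :
    ∑ v ∈ s, #{w ∈ s | H.Adj v w} ≤ 2 * #(H.edgesWithin s) := by
  calc ∑ v ∈ s, #{w ∈ s | H.Adj v w} = #{p ∈ s ×ˢ s | H.Adj p.1 p.2} := by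
        simp only [card_filter, sum_product]
    _ ≤ 2 * #(H.edgesWithin s) := by
      refine card_le_mul_card_image_of_maps_to (f := fun p : V × V => s(p.1, p.2)) ?_ 2 ?_
      · rintro ⟨a, b⟩ hab
        simp only [mem_filter, mem_product] at hab
        simp only [edgesWithin, mem_filter, mem_edgeFinset, mem_edgeSet, Sym2.forall_mem_pair]
        exact ⟨hab.2, hab.1⟩
      · intro e _
        obtain ⟨q, rfl⟩ := Sym2.mk_surjective e
        refine (card_le_card fun p hp => ?_).trans (card_le_two (a := q) (b := q.swap))
        rcases Sym2.mk_eq_mk_iff.1 (mem_filter.1 hp).2 with rfl | rfl <;> simp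

lemma exists_card_mul_card_neighbors_le {s : Finset V} (hs : s.Nonempty) :
    ∃ v ∈ s, #s * #{w ∈ s | H.Adj v w} ≤ 2 * #(H.edgesWithin s) := by
  obtain ⟨v, hv, hmin⟩ := s.exists_min_image (fun v => #{w ∈ s | H.Adj v w}) hs
  exact ⟨v, hv, (card_nsmul_le_sum s _ _ hmin).trans
    (H.sum_card_neighbors_le_two_mul_card_edgesWithin s)⟩

theorem exists_isNIndepSet_of_mul_rpow_lt_card {ε : ℝ} (hε : 0 < ε) {k : ℕ}
    (hsparse : ∀ s : Finset V, (#(H.edgesWithin s) : ℝ) ≤ (#s : ℝ) ^ (2 - ε))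
    {j : ℕ} (hjk : j ≤ k) {s : Finset V} (hs : j * (2 * k : ℝ) ^ (1 / ε) < #s) :
    ∃ I ⊆ s, H.IsNIndepSet j I := by
  induction j generalizing s with
  | zero => exact ⟨∅, empty_subset s, by simp, rfl⟩
  | succ j ih =>
    have hs₀ : s.Nonempty := by
      rw [← card_pos, ← Nat.cast_pos (α := ℝ)]
      exact lt_of_le_of_lt (by positivity) hs
    obtain ⟨v, hv, hdeg⟩ := H.exists_card_mul_card_neighbors_le hs₀
    set N := {w ∈ s | H.Adj v w}
    obtain ⟨I, hI, hIndep⟩ : ∃ I ⊆ s.erase v \ N, H.IsNIndepSet j I := by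
      rcases j.eq_zero_or_pos with rfl | hj
      · exact ⟨∅, empty_subset _, by simp, rfl⟩
      refine ih (by omega) ?_
      have hcard : #s ≤ #(s.erase v \ N) + 1 + #N := by
        have := card_erase_add_one hv
        have := card_le_card_sdiff_add_card (s := s.erase v) (t := N)
        omega
      have hstep := sub_one_mul_lt_sub_one_sub hε (a := j + 1) (k := k) (n := #s) (d := #N)
        (by norm_cast; omega) (by exact_mod_cast hjk) (by exact_mod_cast hs) (by positivity)
        (by
          have : (#s * #N : ℝ) ≤ 2 * #(H.edgesWithin s) := by exact_mod_cast hdeg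
          linarith [hsparse s])
      have : (#s : ℝ) ≤ #(s.erase v \ N) + 1 + #N := by exact_mod_cast hcard
      linarith
    refine ⟨insert v I, insert_subset hv (hI.trans (sdiff_subset.trans (erase_subset v s))),
      hIndep.insert fun w hw => ?_⟩
    have hw' := hI hw
    simp only [mem_sdiff, mem_erase, N, mem_filter, not_and] at hw'
    exact ⟨hw'.1.1.symm, hw'.2 hw'.1.2⟩

end SimpleGraph

theorem stmt1_general {V : Type*} [Fintype V] [DecidableEq V] (H : SimpleGraph V)
    [DecidableRel H.Adj] (ε : ℝ) (hε : 0 < ε) (k : ℕ)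
    (hsparse : ∀ s : Finset V,
      (((H.edgeFinset.filter fun e => ∀ v ∈ e, v ∈ s)).card : ℝ) ≤ (s.card : ℝ) ^ (2 - ε))
    (hn : (k : ℝ) * ((2 * k : ℕ) : ℝ) ^ (1 / ε) < (Fintype.card V : ℝ)) :
    ∃ I : Finset V, k ≤ I.card ∧ (↑I : Set V).Pairwise fun u v => ¬ H.Adj u v := by
  obtain ⟨I, -, hI⟩ := H.exists_isNIndepSet_of_mul_rpow_lt_card hε hsparse le_rfl
    (s := univ) (by simpa using hn)
  exact ⟨I, hI.card_eq.ge, hI.isIndepSet⟩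

/-- Every hereditarily ε-sparse graph on more than `k·(2k)^(1/ε)` vertices contains
an independent set of size at least `k`. -/
theorem stmt1 {V : Type*} [Fintype V] [DecidableEq V] (H : SimpleGraph V)
    [DecidableRel H.Adj] (ε : ℝ) (hε : 0 < ε) (k : ℕ) (hk : 1 ≤ k)
    (hsparse : ∀ s : Finset V,
      (((H.edgeFinset.filter fun e => ∀ v ∈ e, v ∈ s)).card : ℝ) ≤ (s.card : ℝ) ^ (2 - ε))
    (hn : (k : ℝ) * ((2 * k : ℕ) : ℝ) ^ (1 / ε) < (Fintype.card V : ℝ)) :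
    ∃ I : Finset V, k ≤ I.card ∧ (↑I : Set V).Pairwise fun u v => ¬ H.Adj u v :=
  stmt1_general H ε hε k hsparse hn
end

section
/- Let G be a {C3,C4}-free graph, let S and T be independent sets of size k, and suppose some vertex w ∈ S ∪ T has degree at least 3k in the subgraph induced by N[S ∪ T]. Then at least k neighbors of w have no neighbor in (S ∪ T) \ {w}. -/
/-!
Call a neighbour `x` of `w` bad if it is adjacent to some `y ∈ S ∪ T` other than `w`. Since the
graph has no `C₄` through `w`, a vertex `y ≠ w` has at most one common neighbour with `w`, so
each `y ∈ S ∪ T` accounts for at most one bad neighbour. Hence at most `2k` of the at least `3k`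
neighbours of `w` are bad.
-/

open Finset

namespace SimpleGraph

variable {V : Type*} [Fintype V] [DecidableEq V] (G : SimpleGraph V) [DecidableRel G.Adj]

theorem degree_le_card_filter_forall_not_adj_add_card (w : V) (A : Finset V)
    (hA : ∀ y ∈ A, y ≠ w → #(G.neighborFinset w ∩ G.neighborFinset y) ≤ 1) :
    G.degree w ≤ #((G.neighborFinset w).filter fun x => ∀ y ∈ A, y ≠ w → ¬ G.Adj x y) + #A := by
  have hbad : (G.neighborFinset w).filter (fun x => ¬ ∀ y ∈ A, y ≠ w → ¬ G.Adj x y) ⊆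
      (A.erase w).biUnion fun y => G.neighborFinset w ∩ G.neighborFinset y := by
    intro x hx
    simp only [mem_filter, not_forall, not_not] at hx
    obtain ⟨hwx, y, hyA, hyw, hxy⟩ := hx
    exact mem_biUnion.2 ⟨y, mem_erase.2 ⟨hyw, hyA⟩,
      mem_inter.2 ⟨hwx, (G.mem_neighborFinset y x).2 hxy.symm⟩⟩
  have hbad_card := (card_le_card hbad).trans <| card_biUnion_le_card_mul _ _ 1 fun y hy =>
    hA y (mem_of_mem_erase hy) (ne_of_mem_erase hy)
  have hsplit := card_filter_add_card_filter_not (s := G.neighborFinset w)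
    (fun x => ∀ y ∈ A, y ≠ w → ¬ G.Adj x y)
  have herase := card_erase_le (s := A) (a := w)
  rw [card_neighborFinset_eq_degree] at hsplit
  omega

end SimpleGraph

theorem stmt4_general {V : Type*} [Fintype V] [DecidableEq V] (G : SimpleGraph V)
    [DecidableRel G.Adj] (k : ℕ) (S T : Finset V)
    (hScard : S.card = k) (hTcard : T.card = k)
    -- the closed neighborhood of `S ∪ T`
    (M : Set V)
    (hM : M = {x : V | x ∈ S ∪ T ∨ ∃ y ∈ S ∪ T, G.Adj y x})
    -- the graph induced by `M` contains no (induced) `C₄`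
    (h4 : ∀ a b c d : V, a ∈ M → b ∈ M → c ∈ M → d ∈ M → a ≠ c → b ≠ d →
      G.Adj a b → G.Adj b c → G.Adj c d → ¬ G.Adj d a)
    (w : V) (hw : w ∈ S ∪ T) (hdeg : 3 * k ≤ G.degree w) :
    k ≤ ((G.neighborFinset w).filter
      fun x => ∀ y ∈ S ∪ T, y ≠ w → ¬ G.Adj x y).card := by
  have hST : ∀ y ∈ S ∪ T, y ∈ M := fun y hy => hM ▸ Or.inl hy
  have hNw : ∀ x, G.Adj w x → x ∈ M := fun x hx => hM ▸ Or.inr ⟨w, hw, hx⟩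
  have hcommon : ∀ y ∈ S ∪ T, y ≠ w → #(G.neighborFinset w ∩ G.neighborFinset y) ≤ 1 := by
    intro y hy hyw
    refine card_le_one.2 fun x₁ hx₁ x₂ hx₂ => ?_
    simp only [mem_inter, SimpleGraph.mem_neighborFinset] at hx₁ hx₂
    by_contra hne
    exact h4 w x₁ y x₂ (hST w hw) (hNw x₁ hx₁.1) (hST y hy) (hNw x₂ hx₂.1) hyw.symm hne
      hx₁.1 hx₁.2.symm hx₂.2 hx₂.1.symm
  have hbound := G.degree_le_card_filter_forall_not_adj_add_card w (S ∪ T) hcommon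
  have hunion : #(S ∪ T) ≤ 2 * k := by
    have := card_union_le S T
    omega
  omega

/-- If `S`, `T` are independent sets of size `k`, the subgraph induced by the closed
neighborhood of `S ∪ T` is {C₃,C₄}-free, and some `w ∈ S ∪ T` has degree at least `3k`,
then at least `k` neighbors of `w` have no neighbor in `(S ∪ T) \ {w}`. -/
theorem stmt4 {V : Type*} [Fintype V] [DecidableEq V] (G : SimpleGraph V)
    [DecidableRel G.Adj] (k : ℕ) (S T : Finset V)
    (hSi : (↑S : Set V).Pairwise fun a b => ¬ G.Adj a b)
    (hTi : (↑T : Set V).Pairwise fun a b => ¬ G.Adj a b)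
    (hScard : S.card = k) (hTcard : T.card = k)
    -- the closed neighborhood of `S ∪ T`
    (M : Set V)
    (hM : M = {x : V | x ∈ S ∪ T ∨ ∃ y ∈ S ∪ T, G.Adj y x})
    -- the graph induced by `M` contains no triangle
    (h3 : ∀ a b c : V, a ∈ M → b ∈ M → c ∈ M →
      G.Adj a b → G.Adj b c → ¬ G.Adj a c)
    -- the graph induced by `M` contains no (induced) `C₄`
    (h4 : ∀ a b c d : V, a ∈ M → b ∈ M → c ∈ M → d ∈ M → a ≠ c → b ≠ d →
      G.Adj a b → G.Adj b c → G.Adj c d → ¬ G.Adj d a)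
    (w : V) (hw : w ∈ S ∪ T) (hdeg : 3 * k ≤ G.degree w) :
    k ≤ ((G.neighborFinset w).filter
      fun x => ∀ y ∈ S ∪ T, y ≠ w → ¬ G.Adj x y).card :=
  stmt4_general G k S T hScard hTcard M hM h4 w hw hdeg
end

section
/- Let G be a connected graph and let S and T be two independent sets of the same size k such that S ∪ T is a 2-independent set (all pairwise distances between distinct vertices of S ∪ T are at least 3). If S ∩ T = ∅ and (u,v) is a pair minimizing distance over u ∈ S, v ∈ T, then every internal vertex of a shortest uv-path, as well as v itself, has no neighbor in S \ {u} and is not in S \ {u}; hence sliding the token from u along the shortest path to v keeps the set independent at every step. -/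
/-! If `w` lies on a shortest `uv`-path, then
`d(u, w) + d(w, v) = d(u, v) ≤ d(s, v) ≤ d(s, w) + d(w, v)`, so `d(u, w) ≤ d(w, s)`.
Hence `3 ≤ d(u, s) ≤ d(u, w) + d(w, s) ≤ 2 d(w, s)`, which forces `d(w, s) ≥ 2`.
The argument uses `edist`, because `dist` is `0` rather than `⊤` between components. -/

namespace SimpleGraph

variable {V : Type*} {G : SimpleGraph V}

lemma edist_le_edist_of_dist_le {u v s t : V} (huv : G.Reachable u v)
    (h : G.dist u v ≤ G.dist s t) : G.edist u v ≤ G.edist s t := by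
  by_cases hst : G.Reachable s t
  · rw [← huv.coe_dist_eq_edist, ← hst.coe_dist_eq_edist]
    exact_mod_cast h
  · rw [edist_eq_top_of_not_reachable hst]
    exact le_top

lemma ne_and_not_adj_of_two_le_edist {a b : V} (h : 2 ≤ G.edist a b) : a ≠ b ∧ ¬G.Adj a b := by
  have : ¬G.edist a b ≤ 1 := fun h1 => absurd (h.trans h1) (by norm_num)
  rw [edist_le_one_iff_adj_or_eq] at this
  tauto

namespace Walk

lemma edist_add_edist_le_length [DecidableEq V] {u v w : V} (p : G.Walk u v)
    (hw : w ∈ p.support) : G.edist u w + G.edist w v ≤ p.length := by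
  rw [← congrArg length (p.take_spec hw), length_append, Nat.cast_add]
  exact add_le_add (edist_le _) (edist_le _)

lemma edist_le_edist_of_mem_support_of_length_eq_dist {u v w s : V} (p : G.Walk u v)
    (hp : p.length = G.dist u v) (hw : w ∈ p.support) (hs : G.edist u v ≤ G.edist s v) :
    G.edist u w ≤ G.edist w s := by
  classical
  have hlen : (p.length : ℕ∞) = G.edist u v := by rw [hp, p.reachable.coe_dist_eq_edist]
  have hsplit := p.edist_add_edist_le_length hw
  have hfin : G.edist w v ≠ ⊤ := ne_top_of_le_ne_top (ENat.natCast_ne_top p.length)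
    (le_add_self.trans hsplit)
  have : G.edist u w + G.edist w v ≤ G.edist w s + G.edist w v :=
    calc G.edist u w + G.edist w v ≤ G.edist s v := (hsplit.trans hlen.le).trans hs
      _ ≤ G.edist s w + G.edist w v := G.edist_triangle
      _ = G.edist w s + G.edist w v := by rw [edist_comm]
  exact (WithTop.add_le_add_iff_right hfin).mp this

end Walk

end SimpleGraph

open SimpleGraph in
theorem stmt12_general {V : Type*} [DecidableEq V] (G : SimpleGraph V)
    (S T : Finset V)
    (h2 : ∀ a ∈ S ∪ T, ∀ b ∈ S ∪ T, a ≠ b → 3 ≤ G.edist a b)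
    (u v : V) (hu : u ∈ S) (hv : v ∈ T)
    (hmin : ∀ s ∈ S, ∀ t ∈ T, G.dist u v ≤ G.dist s t)
    (p : G.Walk u v) (hp : p.length = G.dist u v) :
    ∀ w ∈ p.support, w ≠ u → ∀ s ∈ S, s ≠ u → w ≠ s ∧ ¬ G.Adj w s := by
  intro w hw _ s hs hsu
  have hclosest : G.edist u w ≤ G.edist w s :=
    p.edist_le_edist_of_mem_support_of_length_eq_dist hp hw
      (edist_le_edist_of_dist_le p.reachable (hmin s hs v hv))
  have hus : 3 ≤ G.edist u s :=
    h2 u (Finset.mem_union_left _ hu) s (Finset.mem_union_left _ hs) hsu.symm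
  refine ne_and_not_adj_of_two_le_edist (not_lt.mp fun hlt => ?_)
  have hws : G.edist w s ≤ 1 := ENat.lt_two_iff.mp hlt
  have : G.edist u s ≤ 2 :=
    calc G.edist u s ≤ G.edist u w + G.edist w s := G.edist_triangle
      _ ≤ 1 + 1 := add_le_add (hclosest.trans hws) hws
      _ = 2 := by norm_num
  exact absurd (hus.trans this) (by norm_num)

/-- Let `S`, `T` be disjoint independent sets of size `k` in a connected graph `G` whose
union is 2-independent. If `(u, v)` minimizes distance over `S × T`, then every vertex
`w ≠ u` on a shortest `uv`-path satisfies `N[w] ∩ (S \ {u}) = ∅`. -/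
theorem stmt12 {V : Type*} [DecidableEq V] (G : SimpleGraph V) (hconn : G.Connected)
    (k : ℕ) (S T : Finset V) (hdisj : Disjoint S T)
    (hScard : S.card = k) (hTcard : T.card = k)
    (hSi : (↑S : Set V).Pairwise fun a b => ¬ G.Adj a b)
    (hTi : (↑T : Set V).Pairwise fun a b => ¬ G.Adj a b)
    (h2 : ∀ a ∈ S ∪ T, ∀ b ∈ S ∪ T, a ≠ b → 3 ≤ G.edist a b)
    (u v : V) (hu : u ∈ S) (hv : v ∈ T)
    (hmin : ∀ s ∈ S, ∀ t ∈ T, G.dist u v ≤ G.dist s t)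
    (p : G.Walk u v) (hp : p.length = G.dist u v) :
    ∀ w ∈ p.support, w ≠ u → ∀ s ∈ S, s ≠ u → w ≠ s ∧ ¬ G.Adj w s :=
  stmt12_general G S T h2 u v hu hv hmin p hp
end

section
/- Kim's bound application: every triangle-free graph on more than c·k²/log k vertices (for a suitable absolute constant c) contains an independent set of size at least k. Equivalently, the Ramsey-type statement: a triangle-free graph on n vertices has an independent set of size Ω(√(n log n)). -/
/-!
Let `d` be the maximum degree and `α` the independence number of a triangle-free graph on `n`
vertices. Three bounds hold: `d ≤ α`, since every neighbourhood is independent; `n ≤ α (d + 1)`,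
since a maximum independent set dominates the graph; and Shearer's bound `n ⌊log₂ d⌋ ≤ 16 d α`.
For the last, sum the weight `d·[v ∈ I] + |N(v) ∩ I|` over all vertices `v` and all independent
sets `I`. For fixed `I` the sum over `v` is at most `2 d |I|`. For fixed `v`, group the sets `I`
by `J = I \ N[v]`: a group consists of `J ∪ {v}` and the `2^a` sets `J ∪ s`, where `s` ranges
over subsets of the `a` neighbours of `v` with no neighbour in `J` (independent because the graph
is triangle-free), so its average weight is `(d + a 2^(a-1)) / (1 + 2^a) ≥ ⌊log₂ d⌋ / 8`.

If `α < √(n log n) / 200`, the first two bounds force `d ≥ √(n / log n)`, hence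
`log d ≥ (log n) / 4`, and Shearer's bound fails.
-/

open Finset Real

theorem Finset.two_mul_sum_card_powerset {α : Type*} (A : Finset α) :
    2 * ∑ s ∈ A.powerset, #s = #A * 2 ^ #A := by
  rw [sum_powerset_apply_card (fun k => k)]
  simp only [smul_eq_mul, mul_comm ((#A).choose _), Nat.sum_range_mul_choose]
  rcases Nat.eq_zero_or_pos #A with h | h
  · simp [h]
  · rw [mul_left_comm, ← pow_succ', Nat.sub_add_cancel h]

theorem Nat.log_two_mul_one_add_two_pow_le (d a : ℕ) :
    Nat.log 2 d * (1 + 2 ^ a) ≤ 8 * d + 4 * (a * 2 ^ a) := by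
  set L := Nat.log 2 d
  have hpos : 1 ≤ 2 ^ a := Nat.one_le_two_pow
  rcases le_or_gt L (2 * a) with hL | hL
  · nlinarith
  · have hpow : 2 ^ L ≤ d := Nat.pow_log_le_self 2 (by rintro rfl; simp [L] at hL)
    have hlt : L - a < 2 ^ (L - a) := Nat.lt_two_pow_self
    have hsplit : 2 ^ L = 2 ^ (L - a) * 2 ^ a := by rw [← pow_add]; congr 1; omega
    calc L * (1 + 2 ^ a) ≤ (2 * 2 ^ (L - a)) * (2 * 2 ^ a) := by gcongr <;> omega
      _ = 4 * 2 ^ L := by rw [hsplit]; ring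
      _ ≤ 8 * d + 4 * (a * 2 ^ a) := by omega

theorem Real.log_le_half_self {t : ℝ} (ht : 0 < t) : log t ≤ t / 2 := by
  have h1 := log_le_sub_one_of_pos (sqrt_pos.2 ht)
  rw [log_sqrt ht.le] at h1
  nlinarith [sq_nonneg (√t - 2), sq_sqrt ht.le]

theorem Real.log_lt_natLog_two_add_one (d : ℕ) : log d < Nat.log 2 d + 1 := by
  rcases Nat.eq_zero_or_pos d with rfl | hd
  · simp
  calc log d < log (2 ^ (Nat.log 2 d + 1)) := by
        gcongr; exact_mod_cast Nat.lt_pow_succ_log_self one_lt_two d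
    _ = (Nat.log 2 d + 1) * log 2 := by rw [log_pow]; push_cast; ring
    _ ≤ Nat.log 2 d + 1 := by
        have := log_two_lt_d9
        nlinarith [show (0:ℝ) ≤ Nat.log 2 d from Nat.cast_nonneg _]

theorem Real.log_div_four_le_log {n y : ℝ} (hn : 1 < n) (h : n ≤ y * √(n * log n)) :
    log n / 4 ≤ log y := by
  have hℓ : 0 < log n := log_pos hn
  have hx : 0 < √(n * log n) := sqrt_pos.2 (by positivity)
  have hlogx : log √(n * log n) = (log n + log (log n)) / 2 := by
    rw [log_sqrt (by positivity), log_mul (by positivity) hℓ.ne']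
  have hy : n / √(n * log n) ≤ y := (div_le_iff₀ hx).2 h
  have := log_le_log (by positivity) hy
  rw [log_div (by positivity) hx.ne', hlogx] at this
  linarith [log_le_half_self hℓ]

theorem sqrt_mul_log_le_of_bounds {n d a : ℕ} (h_deg : d ≤ a) (h_greedy : n ≤ a * (d + 1))
    (h_shearer : n * Nat.log 2 d ≤ 16 * d * a) : √(n * log n) ≤ 200 * a := by
  set x := √(n * log n)
  by_contra! hlt
  have hn : (1 : ℝ) < n := by
    by_contra! hn
    have : x = 0 := sqrt_eq_zero'.2 (mul_log_nonpos (Nat.cast_nonneg n) hn)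
    linarith [(Nat.cast_nonneg a : (0 : ℝ) ≤ a)]
  have hℓ : 0 < log n := log_pos hn
  have hx2 : x ^ 2 = n * log n := sq_sqrt (by positivity)
  have hxn : x ≤ n := by
    rw [← sqrt_sq (by positivity : (0:ℝ) ≤ n)]
    exact sqrt_le_sqrt (by nlinarith [log_le_self (by positivity : (0:ℝ) ≤ n)])
  have ha : (a : ℝ) * 200 < x := by linarith
  have hd : (d : ℝ) ≤ a := by exact_mod_cast h_deg
  have hnd : (n : ℝ) ≤ a * (d + 1) := by exact_mod_cast h_greedy
  have hdx : 199 * (n : ℝ) < d * x := by nlinarith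
  have hd2 : 2 ≤ d := by
    have : (199 : ℝ) * n < d * n := by nlinarith
    have : (199 : ℝ) < d := by nlinarith
    exact_mod_cast (by linarith : (2 : ℝ) ≤ d)
  have hL1 : 1 ≤ Nat.log 2 d := Nat.le_log_of_pow_le one_lt_two (by simpa using hd2)
  have hlogd : log n / 4 ≤ log d := log_div_four_le_log hn (by linarith)
  have hL : log n / 8 < Nat.log 2 d := by
    have := log_lt_natLog_two_add_one d
    have : (1 : ℝ) ≤ Nat.log 2 d := by exact_mod_cast hL1
    linarith
  have hsh : (n : ℝ) * Nat.log 2 d ≤ 16 * d * a := by exact_mod_cast h_shearer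
  have : (n : ℝ) * log n / 8 < n * Nat.log 2 d := by nlinarith
  nlinarith

namespace SimpleGraph

variable {V : Type*} [Fintype V] {G : SimpleGraph V} [DecidableRel G.Adj]

theorem degree_le_indepNum (htf : G.CliqueFree 3) (v : V) : G.degree v ≤ G.indepNum := by
  rw [← card_neighborFinset_eq_degree]
  exact IsIndepSet.card_le_indepNum
    (by simpa using G.isIndepSet_neighborSet_of_triangleFree htf v)

variable [DecidableEq V]

variable (G) in
def indepSets : Finset (Finset V) := {I | G.IsIndepSet I}

variable (G) in
def shearerWeight (d : ℕ) (v : V) (I : Finset V) : ℕ :=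
  (if v ∈ I then d else 0) + #(G.neighborFinset v ∩ I)

lemma mem_indepSets {I : Finset V} : I ∈ G.indepSets ↔ G.IsIndepSet I := by
  simp [indepSets]

lemma filter_sdiff_insert_neighborFinset_eq (htf : G.CliqueFree 3) {v : V} {J : Finset V}
    (hJ : G.IsIndepSet J) (hJv : Disjoint J (insert v (G.neighborFinset v))) :
    {I ∈ G.indepSets | I \ insert v (G.neighborFinset v) = J} =
      insert (insert v J)
        ({u ∈ G.neighborFinset v | ∀ w ∈ J, ¬G.Adj u w}.powerset.image (J ∪ ·)) := by
  have hN := G.isIndepSet_neighborSet_of_triangleFree htf v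
  simp only [IsIndepSet, Set.Pairwise, mem_coe, mem_neighborSet] at hN hJ
  rw [Finset.disjoint_left] at hJv
  simp only [mem_insert, mem_neighborFinset] at hJv
  ext I
  simp only [mem_filter, mem_indepSets, mem_insert, mem_image, mem_powerset, subset_iff,
    Finset.ext_iff, mem_sdiff, mem_union, mem_neighborFinset, IsIndepSet, Set.Pairwise, mem_coe]
  constructor
  · rintro ⟨hI, hIJ⟩
    by_cases hv : v ∈ I
    · grind [G.adj_symm]
    · refine .inr ⟨{u ∈ G.neighborFinset v | u ∈ I}, ?_, ?_⟩ <;>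
        simp only [mem_filter, mem_neighborFinset] <;> grind [G.adj_symm]
  · grind [G.adj_symm]

lemma sum_filter_sdiff_insert_neighborFinset {M : Type*} [AddCommMonoid M]
    (htf : G.CliqueFree 3) {v : V} {J : Finset V} (hJ : G.IsIndepSet J)
    (hJv : Disjoint J (insert v (G.neighborFinset v))) (g : Finset V → M) :
    ∑ I ∈ G.indepSets with I \ insert v (G.neighborFinset v) = J, g I =
      g (insert v J) +
        ∑ s ∈ {u ∈ G.neighborFinset v | ∀ w ∈ J, ¬G.Adj u w}.powerset, g (J ∪ s) := by
  rw [filter_sdiff_insert_neighborFinset_eq htf hJ hJv, sum_insert, sum_image]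
  · intro s hs t ht hst
    simp only [coe_powerset, Set.mem_preimage, Set.mem_powerset_iff, coe_subset] at hs ht
    rw [Finset.disjoint_left] at hJv
    ext a
    have := congr_arg (a ∈ ·) hst
    simp only [mem_union, eq_iff_iff] at this
    grind [mem_neighborFinset]
  · simp only [mem_image, mem_powerset, not_exists, not_and]
    intro s hs hsJ
    rw [Finset.disjoint_left] at hJv
    have := hsJ ▸ mem_insert_self v J
    grind [mem_neighborFinset, G.irrefl]

lemma shearerWeight_insert_self {d : ℕ} {v : V} {J : Finset V}
    (hJv : Disjoint J (insert v (G.neighborFinset v))) :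
    G.shearerWeight d v (insert v J) = d := by
  rw [Finset.disjoint_left] at hJv
  have : G.neighborFinset v ∩ insert v J = ∅ := by
    ext u; grind [mem_neighborFinset, G.irrefl]
  simp [shearerWeight, this]

lemma shearerWeight_union {d : ℕ} {v : V} {J s : Finset V}
    (hJv : Disjoint J (insert v (G.neighborFinset v))) (hs : s ⊆ G.neighborFinset v) :
    G.shearerWeight d v (J ∪ s) = #s := by
  rw [Finset.disjoint_left] at hJv
  have hv : v ∉ J ∪ s := by grind [mem_neighborFinset, G.irrefl]
  have : G.neighborFinset v ∩ (J ∪ s) = s := by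
    ext u; grind [mem_neighborFinset]
  simp [shearerWeight, hv, this]

lemma natLog_mul_card_indepSets_le (htf : G.CliqueFree 3) (d : ℕ) (v : V) :
    Nat.log 2 d * #G.indepSets ≤ 8 * ∑ I ∈ G.indepSets, G.shearerWeight d v I := by
  set N := insert v (G.neighborFinset v)
  have hmaps : ∀ I ∈ G.indepSets, I \ N ∈ G.indepSets.image (· \ N) :=
    fun I hI => mem_image_of_mem _ hI
  rw [card_eq_sum_card_fiberwise hmaps, ← sum_fiberwise_of_maps_to hmaps, mul_sum, mul_sum]
  refine sum_le_sum fun J hJ => ?_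
  obtain ⟨I, hI, rfl⟩ := mem_image.1 hJ
  have hJ : G.IsIndepSet ↑(I \ N) := (mem_indepSets.1 hI).mono (coe_subset.2 sdiff_subset)
  have hJN : Disjoint (I \ N) N := sdiff_disjoint
  rw [card_eq_sum_ones, sum_filter_sdiff_insert_neighborFinset htf hJ hJN,
    sum_filter_sdiff_insert_neighborFinset htf hJ hJN, shearerWeight_insert_self hJN,
    sum_congr rfl fun s hs =>
      shearerWeight_union hJN ((mem_powerset.1 hs).trans (filter_subset _ _))]
  set A := {u ∈ G.neighborFinset v | ∀ w ∈ I \ N, ¬G.Adj u w}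
  have h1 := Nat.log_two_mul_one_add_two_pow_le d #A
  have h2 := two_mul_sum_card_powerset A
  simp only [sum_const, card_powerset, smul_eq_mul, mul_one]
  omega

lemma sum_card_neighborFinset_inter (I : Finset V) :
    ∑ v, #(G.neighborFinset v ∩ I) = ∑ u ∈ I, G.degree u := by
  calc ∑ v, #(G.neighborFinset v ∩ I) = ∑ v, ∑ u ∈ I, if G.Adj u v then 1 else 0 := by
        refine sum_congr rfl fun v _ => ?_
        rw [sum_boole, Nat.cast_id, ← filter_mem_eq_inter]
        congr 1; ext; simp [adj_comm, and_comm]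
    _ = ∑ u ∈ I, G.degree u := by
        rw [sum_comm]
        refine sum_congr rfl fun u _ => ?_
        simp [sum_boole, ← card_neighborFinset_eq_degree, neighborFinset_eq_filter]

lemma sum_shearerWeight_le {d : ℕ} (hdeg : ∀ v, G.degree v ≤ d) (I : Finset V) :
    ∑ v, G.shearerWeight d v I ≤ 2 * d * #I := by
  simp only [shearerWeight, sum_add_distrib, sum_ite_mem, univ_inter, sum_const, smul_eq_mul,
    sum_card_neighborFinset_inter]
  have : ∑ u ∈ I, G.degree u ≤ #I * d := by simpa using sum_le_sum fun u (_ : u ∈ I) => hdeg u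
  linarith

theorem card_mul_natLog_le_indepNum (htf : G.CliqueFree 3) {d : ℕ}
    (hdeg : ∀ v, G.degree v ≤ d) :
    Fintype.card V * Nat.log 2 d ≤ 16 * d * G.indepNum := by
  have hne : 0 < #G.indepSets := card_pos.2 ⟨∅, mem_indepSets.2 (by simp)⟩
  refine Nat.le_of_mul_le_mul_right ?_ hne
  calc Fintype.card V * Nat.log 2 d * #G.indepSets
      = ∑ _v : V, Nat.log 2 d * #G.indepSets := by simp [mul_assoc]
    _ ≤ ∑ v : V, 8 * ∑ I ∈ G.indepSets, G.shearerWeight d v I :=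
        sum_le_sum fun v _ => natLog_mul_card_indepSets_le htf d v
    _ = 8 * ∑ I ∈ G.indepSets, ∑ v, G.shearerWeight d v I := by rw [← mul_sum, sum_comm]
    _ ≤ 8 * ∑ I ∈ G.indepSets, 2 * d * G.indepNum := by
        gcongr with I hI
        exact (sum_shearerWeight_le hdeg I).trans
          (Nat.mul_le_mul_left _ (mem_indepSets.1 hI).card_le_indepNum)
    _ = 16 * d * G.indepNum * #G.indepSets := by rw [sum_const, smul_eq_mul]; ring

theorem card_le_indepNum_mul_succ {d : ℕ} (hdeg : ∀ v, G.degree v ≤ d) :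
    Fintype.card V ≤ G.indepNum * (d + 1) := by
  obtain ⟨s, hs, hcard⟩ := G.exists_isNIndepSet_indepNum
  have hcover : univ ⊆ s.biUnion fun u => insert u (G.neighborFinset u) := by
    intro v _
    by_contra hv
    simp only [mem_biUnion, mem_insert, mem_neighborFinset, not_exists, not_and, not_or] at hv
    have hind : G.IsIndepSet ↑(insert v s) := by
      rw [coe_insert]
      exact hs.insert fun u hu _ => ⟨fun h => (hv u hu).2 h.symm, (hv u hu).2⟩
    have := hind.card_le_indepNum
    rw [card_insert_of_notMem fun h => (hv v h).1 rfl, hcard] at this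
    omega
  calc Fintype.card V ≤ ∑ u ∈ s, #(insert u (G.neighborFinset u)) :=
        (card_le_card hcover).trans card_biUnion_le
    _ ≤ ∑ _u ∈ s, (d + 1) :=
        sum_le_sum fun u _ => (card_insert_le _ _).trans (by simpa using hdeg u)
    _ = G.indepNum * (d + 1) := by simp [hcard]

end SimpleGraph

/-- Ramsey-type bound (Kim): there is an absolute constant `c > 0` such that every
triangle-free graph on `n` vertices contains an independent set of size at least
`c·√(n log n)`. -/
theorem stmt14 :
    ∃ c : ℝ, 0 < c ∧
      ∀ (V : Type) [Fintype V] (G : SimpleGraph V),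
        G.CliqueFree 3 →
        ∃ I : Finset V,
          ((↑I : Set V).Pairwise fun a b => ¬ G.Adj a b) ∧
          c * Real.sqrt ((Fintype.card V : ℝ) * Real.log (Fintype.card V)) ≤ I.card := by
  refine ⟨1 / 200, by norm_num, fun V _ G htf => ?_⟩
  classical
  obtain ⟨I, hI, hcard⟩ := G.exists_isNIndepSet_indepNum
  have hbound := sqrt_mul_log_le_of_bounds
    (G.maxDegree_le_of_forall_degree_le _ (SimpleGraph.degree_le_indepNum htf))
    (SimpleGraph.card_le_indepNum_mul_succ G.degree_le_maxDegree)
    (SimpleGraph.card_mul_natLog_le_indepNum htf G.degree_le_maxDegree)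
  refine ⟨I, hI, ?_⟩
  rw [hcard]
  linarith
end
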